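/- arXiv:2004.13803 — 6 statements merged into one kernel-verified Lean document; each statement's English description precedes it below -/
import Mathlib

section
/- Let K = ℂ((t)), O = ℂ[[t]], and let [L₁],…,[L_k] be homothety classes of O-lattices in K^n. Then the min-convex hull satisfies minconv([L₁],…,[L_k]) = ⋃_{[L] ∈ minconv([L₂],…,[L_k])} minconv([L₁],[L]). -/
set_option maxHeartbeats 1000000
set_option synthInstance.maxHeartbeats 1000000

open Pointwise

noncomputable section

/-- `K = ℂ((t))`, the field of formal Laurent series over `ℂ`. -/
abbrev K := LaurentSeries ℂ

/-- `O = ℂ[[t]]`, the ring of formal power series, the valuation ring of `K`. -/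
abbrev O := PowerSeries ℂ

/-- `K^n`. -/
abbrev V (n : ℕ) := Fin n → K

/-- An `O`-lattice in `K^n`: a finitely generated `O`-submodule whose `K`-span is all of
`K^n`. -/
def IsLattice {n : ℕ} (L : Submodule O (V n)) : Prop :=
  L.FG ∧ Submodule.span K (L : Set (V n)) = ⊤

instance : SMulCommClass K O K :=
  ⟨fun a b c => by simp only [Algebra.smul_def, smul_eq_mul]; ring⟩

/-- The uniformizer `t` of `O`, viewed as an element of `K`. -/
def tK : K := algebraMap O K PowerSeries.X

lemma tK_ne_zero : tK ≠ 0 :=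
  (map_ne_zero_iff _ (IsFractionRing.injective O K)).2 PowerSeries.X_ne_zero

/-- Two `O`-submodules of `K^n` are homothetic if they differ by an integer power of `t`. -/
def Homothetic {n : ℕ} (L L' : Submodule O (V n)) : Prop :=
  ∃ k : ℤ, L' = (tK ^ k) • L

instance homSetoid (n : ℕ) : Setoid (Submodule O (V n)) where
  r := Homothetic
  iseqv := by
    constructor
    · intro L; exact ⟨0, by simp⟩
    · rintro L L' ⟨k, rfl⟩
      exact ⟨-k, by rw [smul_smul, ← zpow_add₀ tK_ne_zero]; simp⟩
    · rintro L L' L'' ⟨k, rfl⟩ ⟨l, rfl⟩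
      exact ⟨l + k, by rw [smul_smul, ← zpow_add₀ tK_ne_zero]⟩

/-- Homothety classes of `O`-submodules of `K^n`. -/
def LatClass (n : ℕ) := Quotient (homSetoid n)

/-- A set `X` of homothety classes is min-convex if whenever classes
`[L₁], …, [L_k] ∈ X` (with `k ≥ 1`), the class of the intersection lies in `X`. -/
def MinConvex {n : ℕ} (X : Set (LatClass n)) : Prop :=
  ∀ (k : ℕ) (Ls : Fin (k + 1) → Submodule O (V n)),
    (∀ i, (⟦Ls i⟧ : LatClass n) ∈ X) → (⟦⨅ i, Ls i⟧ : LatClass n) ∈ X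

/-- The min-convex hull of a set of lattice classes: the smallest min-convex set
containing it. -/
def minconvHull {n : ℕ} (S : Set (LatClass n)) : Set (LatClass n) :=
  ⋂₀ {X | MinConvex X ∧ S ⊆ X}

/-!
Pass from classes to their homothety-saturated sets of representatives. A set `X` of classes is
min-convex iff its representatives are closed under `⊓`, and the representatives of
`minconvHull X` are the `⊓`-closure of those of `X`: this closure stays saturated because
`t^a • -` commutes with `⊓`. The `⊓`-closure of `s ∪ t` consists of the elements of the closures
of `s` and of `t` and the meets of one of each. The representatives `t^a L₁` of `[L₁]` are
already `⊓`-closed, because `t^a L₁ ⊓ t^b L₁ = t^(max a b) L₁` as `t ∈ O`. Hence an element of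
`minconv([L₁],…,[L_k])` is `[L₁]`, an element `C` of `minconv([L₂],…,[L_k])`, or `[t^a L₁ ⊓ Q]`
with `[Q]` in `minconv([L₂],…,[L_k])`, and each of these lies in some `minconv([L₁], C)`.
-/

theorem infClosure_union {α : Type*} [SemilatticeInf α] (s t : Set α) :
    infClosure (s ∪ t) =
      infClosure s ∪ infClosure t ∪ Set.image2 (· ⊓ ·) (infClosure s) (infClosure t) := by
  set u := infClosure s ∪ infClosure t ∪ Set.image2 (· ⊓ ·) (infClosure s) (infClosure t)
  have inf_left_mem : ∀ x ∈ u, ∀ b ∈ infClosure s, x ⊓ b ∈ u := by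
    rintro x ((hx | hx) | ⟨b', hb', c, hc, rfl⟩) b hb
    · exact Or.inl (Or.inl (infClosed_infClosure hx hb))
    · exact Or.inr ⟨b, hb, x, hx, inf_comm _ _⟩
    · exact Or.inr ⟨b' ⊓ b, infClosed_infClosure hb' hb, c, hc, inf_right_comm _ _ _⟩
  have inf_right_mem : ∀ x ∈ u, ∀ c ∈ infClosure t, x ⊓ c ∈ u := by
    rintro x ((hx | hx) | ⟨b, hb, c', hc', rfl⟩) c hc
    · exact Or.inr ⟨x, hx, c, hc, rfl⟩
    · exact Or.inl (Or.inr (infClosed_infClosure hx hc))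
    · exact Or.inr ⟨b, hb, c' ⊓ c, infClosed_infClosure hc' hc, (inf_assoc _ _ _).symm⟩
  refine le_antisymm (infClosure_min ?_ ?_) ?_
  · exact Set.union_subset_union subset_infClosure subset_infClosure |>.trans
      Set.subset_union_left
  · rintro x hx _ ((hb | hc) | ⟨b, hb, c, hc, rfl⟩)
    · exact inf_left_mem x hx _ hb
    · exact inf_right_mem x hx _ hc
    · rw [← inf_assoc]
      exact inf_right_mem _ (inf_left_mem x hx b hb) c hc
  · refine Set.union_subset (Set.union_subset (infClosure_mono Set.subset_union_left)
      (infClosure_mono Set.subset_union_right)) ?_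
    rintro _ ⟨b, hb, c, hc, rfl⟩
    exact infClosed_infClosure (infClosure_mono Set.subset_union_left hb)
      (infClosure_mono Set.subset_union_right hc)

section Homothety

variable {n : ℕ}

theorem zpow_tK_smul_inf (a : ℤ) (P Q : Submodule O (V n)) :
    tK ^ a • (P ⊓ Q) = tK ^ a • P ⊓ tK ^ a • Q :=
  Submodule.map_inf _ (smul_right_injective (V n) (zpow_ne_zero a tK_ne_zero))

theorem pow_tK_smul_le (d : ℕ) (N : Submodule O (V n)) : tK ^ d • N ≤ N := by
  rintro _ ⟨y, hy, rfl⟩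
  change (algebraMap O K PowerSeries.X) ^ d • y ∈ N
  rw [← map_pow]
  exact (algebraMap_smul K (PowerSeries.X ^ d : O) y).symm ▸ N.smul_mem _ hy

theorem antitone_zpow_tK_smul (N : Submodule O (V n)) : Antitone fun a : ℤ => tK ^ a • N := by
  intro a b hab
  obtain ⟨d, hd⟩ := Int.eq_ofNat_of_zero_le (sub_nonneg.2 hab)
  calc tK ^ b • N = tK ^ a • tK ^ d • N := by
        rw [smul_smul, ← zpow_natCast, ← zpow_add₀ tK_ne_zero, ← hd, add_sub_cancel]
    _ ≤ tK ^ a • N := Submodule.map_mono (pow_tK_smul_le d N)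

theorem zpow_tK_smul_inf_zpow_tK_smul (a b : ℤ) (N : Submodule O (V n)) :
    tK ^ a • N ⊓ tK ^ b • N = tK ^ max a b • N := by
  rcases le_total a b with h | h
  · rw [max_eq_right h, inf_eq_right.2 (antitone_zpow_tK_smul N h)]
  · rw [max_eq_left h, inf_eq_left.2 (antitone_zpow_tK_smul N h)]

end Homothety

section Hull

variable {n : ℕ}

def representatives (X : Set (LatClass n)) : Set (Submodule O (V n)) :=
  {P | (⟦P⟧ : LatClass n) ∈ X}

theorem mk_zpow_tK_smul (a : ℤ) (N : Submodule O (V n)) :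
    (⟦tK ^ a • N⟧ : LatClass n) = ⟦N⟧ :=
  (Quotient.sound (show Homothetic N (tK ^ a • N) from ⟨a, rfl⟩)).symm

theorem infClosed_representatives_singleton (N : Submodule O (V n)) :
    InfClosed (representatives {(⟦N⟧ : LatClass n)}) := by
  intro P hP Q hQ
  obtain ⟨a, rfl⟩ := Quotient.exact (Set.mem_singleton_iff.1 hP).symm
  obtain ⟨b, rfl⟩ := Quotient.exact (Set.mem_singleton_iff.1 hQ).symm
  show ⟦_⟧ = _
  rw [zpow_tK_smul_inf_zpow_tK_smul, mk_zpow_tK_smul]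

theorem zpow_tK_smul_mem_infClosure {X : Set (LatClass n)} (a : ℤ) {P : Submodule O (V n)}
    (hP : P ∈ infClosure (representatives X)) :
    tK ^ a • P ∈ infClosure (representatives X) := by
  refine infClosure_min (t := (tK ^ a • ·) ⁻¹' infClosure _) (fun Q hQ => ?_) ?_ hP
  · exact subset_infClosure (show (⟦tK ^ a • Q⟧ : LatClass n) ∈ X by rwa [mk_zpow_tK_smul])
  · intro Q hQ R hR
    rw [Set.mem_preimage, zpow_tK_smul_inf]
    exact infClosed_infClosure hQ hR

theorem minConvex_iff_infClosed {X : Set (LatClass n)} :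
    MinConvex X ↔ InfClosed (representatives X) := by
  refine ⟨fun hX P hP Q hQ => ?_, fun hX k Ls hLs => hX.iInf_mem_of_nonempty hLs⟩
  have hPQ : (⨅ i, ![P, Q] i) = P ⊓ Q :=
    le_antisymm (le_inf (iInf_le _ 0) (iInf_le _ 1)) (le_iInf fun i => by fin_cases i <;> simp)
  show (⟦P ⊓ Q⟧ : LatClass n) ∈ X
  simpa only [hPQ] using hX 1 ![P, Q] (Fin.forall_fin_two.2 ⟨hP, hQ⟩)

theorem subset_minconvHull (X : Set (LatClass n)) : X ⊆ minconvHull X :=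
  Set.subset_sInter fun _ hY => hY.2

theorem representatives_minconvHull (X : Set (LatClass n)) :
    representatives (minconvHull X) = infClosure (representatives X) := by
  refine le_antisymm ?_ (infClosure_min (fun P hP => subset_minconvHull X hP) ?_)
  · have hsat : representatives (Quotient.mk _ '' infClosure (representatives X)) =
        infClosure (representatives X) := by
      refine (Set.subset_preimage_image _ _).antisymm' ?_
      rintro P ⟨Q, hQ, hQP⟩
      obtain ⟨a, rfl⟩ := Quotient.exact hQP
      exact zpow_tK_smul_mem_infClosure a hQ
    have hmin : minconvHull X ⊆ Quotient.mk _ '' infClosure (representatives X) := by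
      refine Set.sInter_subset_of_mem (show MinConvex _ ∧ X ⊆ _ from ⟨?_, fun D hD => ?_⟩)
      · rw [minConvex_iff_infClosed, hsat]
        exact infClosed_infClosure
      · obtain ⟨P, rfl⟩ := Quotient.exists_rep D
        exact Set.mem_image_of_mem _ (subset_infClosure (show P ∈ representatives X from hD))
    exact fun P hP => hsat.subset (hmin hP)
  · intro P hP Q hQ
    exact Set.mem_sInter.2 fun Y hY => minConvex_iff_infClosed.1 hY.1 (hP Y hY) (hQ Y hY)

theorem mk_mem_minconvHull_iff {X : Set (LatClass n)} {P : Submodule O (V n)} :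
    (⟦P⟧ : LatClass n) ∈ minconvHull X ↔ P ∈ infClosure (representatives X) := by
  rw [← representatives_minconvHull]
  rfl

end Hull

theorem minconvHull_insert_general {n k : ℕ} (L₁ : Submodule O (V n))
    (Ls : Fin (k + 1) → Submodule O (V n)) :
    minconvHull (insert (⟦L₁⟧ : LatClass n) (Set.range fun i => (⟦Ls i⟧ : LatClass n))) =
      ⋃ C ∈ minconvHull (Set.range fun i => (⟦Ls i⟧ : LatClass n)),
        minconvHull {(⟦L₁⟧ : LatClass n), C} := by
  set S := Set.range fun i => (⟦Ls i⟧ : LatClass n)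
  refine Set.Subset.antisymm (fun D hD => ?_) (Set.iUnion₂_subset fun C hC D hD => ?_)
  · obtain ⟨P, rfl⟩ := Quotient.exists_rep D
    have hP : P ∈ infClosure (representatives {⟦L₁⟧} ∪ representatives S) :=
      mk_mem_minconvHull_iff.1 hD
    refine Set.mem_iUnion₂.2 ?_
    rcases (infClosure_union _ _).subset hP with (hP | hP) | ⟨A, hA, Q, hQ, rfl⟩
    · have hP' := (infClosed_representatives_singleton L₁).infClosure_eq.subset hP
      exact ⟨⟦Ls 0⟧, subset_minconvHull S ⟨0, rfl⟩, subset_minconvHull _ (Or.inl hP')⟩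
    · exact ⟨⟦P⟧, mk_mem_minconvHull_iff.2 hP, subset_minconvHull _ (Or.inr rfl)⟩
    · have hA' := (infClosed_representatives_singleton L₁).infClosure_eq.subset hA
      exact ⟨⟦Q⟧, mk_mem_minconvHull_iff.2 hQ,
        mk_mem_minconvHull_iff.2 (inf_mem_infClosure (Or.inl hA') (Or.inr rfl))⟩
  · obtain ⟨P, rfl⟩ := Quotient.exists_rep D
    refine mk_mem_minconvHull_iff.2 (infClosure_min ?_ infClosed_infClosure
      (mk_mem_minconvHull_iff.1 hD))
    rintro Q (hQ | hQ)
    · exact subset_infClosure (Or.inl hQ)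
    · have hQS : Q ∈ infClosure (representatives S) := mk_mem_minconvHull_iff.1 (hQ ▸ hC)
      exact infClosure_mono (fun _ => Or.inr) hQS

/-- `minconv([L₁],…,[L_k]) = ⋃_{[L] ∈ minconv([L₂],…,[L_k])} minconv([L₁],[L])`. -/
theorem minconvHull_insert {n k : ℕ} (L₁ : Submodule O (V n))
    (Ls : Fin (k + 1) → Submodule O (V n))
    (hL₁ : IsLattice L₁) (hLs : ∀ i, IsLattice (Ls i)) :
    minconvHull (insert (⟦L₁⟧ : LatClass n) (Set.range fun i => (⟦Ls i⟧ : LatClass n))) =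
      ⋃ C ∈ minconvHull (Set.range fun i => (⟦Ls i⟧ : LatClass n)),
        minconvHull {(⟦L₁⟧ : LatClass n), C} :=
  minconvHull_insert_general L₁ Ls
end
end

section
/- Let K = ℂ((t)), O = ℂ[[t]]. The min-convex hull of any finite set of homothety classes of O-lattices in K^n is a finite set. (Dually, the max-convex hull, defined using sums of lattices, is finite.) -/
/-!
Fix lattices `L₀, …, Lₖ` and write `t` for the uniformizer. Consider the classes
`[⋂ᵢ tᵃⁱ Lᵢ]` with shift vectors `a ∈ ℤᵏ⁺¹`. An intersection of such intersections is again
one (the shifts combine by `max`), and since `tᴺ Lⱼ ⊆ Lᵢ` for some `N` and all `i, j`, each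
`[Lᵢ]` is one of them; so they form a min-convex set containing the `[Lᵢ]`. A shift lying more
than `N` below the largest one can be raised to that bound without changing the intersection,
so up to homothety every shift vector lies in `{0, …, N}ᵏ⁺¹` and the set is finite. Sums are
intersections in the order dual, where `t⁻¹` plays the role of `t`; this gives the max-convex
hull.
-/

set_option maxHeartbeats 1000000
set_option synthInstance.maxHeartbeats 1000000

open Pointwise

noncomputable section

/-- Max-convexity: closure under classes of finite sums of representatives. -/
def MaxConvex {n : ℕ} (X : Set (LatClass n)) : Prop :=
  ∀ (k : ℕ) (Ls : Fin (k + 1) → Submodule O (V n)),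
    (∀ i, (⟦Ls i⟧ : LatClass n) ∈ X) → (⟦⨆ i, Ls i⟧ : LatClass n) ∈ X

/-- The max-convex hull of a set of lattice classes. -/
def maxconvHull {n : ℕ} (S : Set (LatClass n)) : Set (LatClass n) :=
  ⋂₀ {X | MaxConvex X ∧ S ⊆ X}

section ShiftedInf

variable {G α ι : Type*} [Group G] [MulAction G α] [CompleteLattice α]
  [CovariantClass G α HSMul.hSMul LE.le]

lemma le_inv_smul_iff_smul_le {g : G} {x y : α} : x ≤ g⁻¹ • y ↔ g • x ≤ y :=
  ⟨fun h => smul_inv_smul g y ▸ smul_le_smul_left g h,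
    fun h => inv_smul_smul g x ▸ smul_le_smul_left g⁻¹ h⟩

lemma smul_iInf_eq (g : G) {κ : Sort*} (f : κ → α) : g • ⨅ j, f j = ⨅ j, g • f j :=
  smul_iInf_le.antisymm <| by
    calc ⨅ j, g • f j = g • g⁻¹ • ⨅ j, g • f j := (smul_inv_smul g _).symm
      _ ≤ g • ⨅ j, g⁻¹ • g • f j := smul_le_smul_left g smul_iInf_le
      _ = g • ⨅ j, f j := by simp only [inv_smul_smul]

lemma antitone_zpow_smul {g : G} (hg : ∀ x : α, g • x ≤ x) (x : α) :
    Antitone fun c : ℤ => g ^ c • x := by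
  intro c d hcd
  obtain ⟨k, rfl⟩ := Int.exists_add_of_le hcd
  simp only [zpow_add, zpow_natCast, mul_smul]
  exact smul_le_smul_left _ (pow_smul_le (hg x) k)

lemma iInf_zpow_smul {g : G} (hg : ∀ x : α, g • x ≤ x) {κ : Type*} [Fintype κ] [Nonempty κ]
    (e : κ → ℤ) (x : α) :
    ⨅ j, g ^ e j • x = g ^ Finset.univ.sup' Finset.univ_nonempty e • x := by
  obtain ⟨j₀, -, hj₀⟩ := Finset.exists_mem_eq_sup' Finset.univ_nonempty e
  refine le_antisymm (hj₀ ▸ iInf_le _ j₀) (le_iInf fun j => ?_)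
  exact antitone_zpow_smul hg x (Finset.le_sup' e (Finset.mem_univ j))

def shiftedInf (g : G) (L : ι → α) (a : ι → ℤ) : α := ⨅ i, g ^ a i • L i

lemma zpow_smul_shiftedInf (g : G) (L : ι → α) (c : ℤ) (a : ι → ℤ) :
    g ^ c • shiftedInf g L a = shiftedInf g L fun i => c + a i := by
  simp only [shiftedInf, smul_iInf_eq, smul_smul, zpow_add]

lemma iInf_shiftedInf {g : G} (hg : ∀ x : α, g • x ≤ x) (L : ι → α)
    {κ : Type*} [Fintype κ] [Nonempty κ] (a : κ → ι → ℤ) :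
    ⨅ j, shiftedInf g L (a j) =
      shiftedInf g L fun i => Finset.univ.sup' Finset.univ_nonempty fun j => a j i := by
  simp only [shiftedInf]
  rw [iInf_comm]
  exact iInf_congr fun i => iInf_zpow_smul hg _ _

lemma shiftedInf_ite_eq [DecidableEq ι] {g : G} {L : ι → α} {N : ℕ}
    (hN : ∀ i j, g ^ N • L j ≤ L i) (i₀ : ι) :
    shiftedInf g L (fun i => if i = i₀ then 0 else -N) = L i₀ := by
  refine le_antisymm ((iInf_le _ i₀).trans_eq (by simp)) (le_iInf fun i => ?_)
  dsimp only
  split_ifs with h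
  · rw [h, zpow_zero, one_smul]
  · rw [zpow_neg, zpow_natCast]
    exact le_inv_smul_iff_smul_le.2 (hN i i₀)

lemma shiftedInf_eq_max_sub {g : G} {L : ι → α} {N : ℕ} (hg : ∀ x : α, g • x ≤ x)
    (hN : ∀ i j, g ^ N • L j ≤ L i) [Fintype ι] [Nonempty ι] (a : ι → ℤ) :
    shiftedInf g L a =
      shiftedInf g L fun i => max (a i) (Finset.univ.sup' Finset.univ_nonempty a - N) := by
  set m := Finset.univ.sup' Finset.univ_nonempty a
  refine le_antisymm (le_iInf fun i => ?_)
    (iInf_mono fun i => antitone_zpow_smul hg _ (le_max_left _ _))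
  dsimp only
  rcases max_choice (a i) (m - N) with h | h
  · rw [h]; exact iInf_le _ i
  · obtain ⟨i₁, -, hi₁⟩ := Finset.exists_mem_eq_sup' Finset.univ_nonempty a
    calc shiftedInf g L a ≤ g ^ a i₁ • L i₁ := iInf_le _ i₁
      _ = g ^ (m - N) • g ^ N • L i₁ := by
        rw [← hi₁, smul_smul, ← zpow_natCast, ← zpow_add, sub_add_cancel]
      _ ≤ g ^ (m - N) • L i := smul_le_smul_left _ (hN i i₁)
      _ = g ^ max (a i) (m - N) • L i := by rw [h]

lemma exists_shiftedInf_eq_zpow_smul {g : G} {L : ι → α} {N : ℕ} (hg : ∀ x : α, g • x ≤ x)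
    (hN : ∀ i j, g ^ N • L j ≤ L i) [Fintype ι] [Nonempty ι] (a : ι → ℤ) :
    ∃ c : ℤ, ∃ b ∈ Set.univ.pi fun _ => Set.Icc (0 : ℤ) N,
      shiftedInf g L a = g ^ c • shiftedInf g L b := by
  set m := Finset.univ.sup' Finset.univ_nonempty a
  have ha : ∀ i, a i ≤ m := fun i => Finset.le_sup' a (Finset.mem_univ i)
  refine ⟨m - N, fun i => max (a i) (m - N) - (m - N), fun i _ => ?_, ?_⟩
  · have := ha i
    constructor <;> dsimp only <;> omega
  · rw [zpow_smul_shiftedInf]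
    simp only [add_sub_cancel]
    exact shiftedInf_eq_max_sub hg hN a

theorem exists_finite_iInf_closed_superset {Q : Type*} (q : α → Q) {g : G}
    (hq : ∀ x y, q x = q y ↔ ∃ c : ℤ, y = g ^ c • x) (hg : ∀ x : α, g • x ≤ x)
    [Fintype ι] [Nonempty ι] (L : ι → α) (N : ℕ) (hN : ∀ i j, g ^ N • L j ≤ L i) :
    ∃ X : Set Q, X.Finite ∧ Set.range (q ∘ L) ⊆ X ∧
      ∀ (m : ℕ) (M : Fin (m + 1) → α), (∀ j, q (M j) ∈ X) → q (⨅ j, M j) ∈ X := by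
  classical
  refine ⟨Set.range (q ∘ shiftedInf g L), ?_, ?_, ?_⟩
  · refine ((Set.Finite.pi fun _ => Set.finite_Icc (0 : ℤ) N).image
      (q ∘ shiftedInf g L)).subset ?_
    rintro _ ⟨a, rfl⟩
    obtain ⟨c, b, hb, hab⟩ := exists_shiftedInf_eq_zpow_smul hg hN a
    exact ⟨b, hb, (hq _ _).2 ⟨c, hab⟩⟩
  · rintro _ ⟨i, rfl⟩
    exact ⟨_, congrArg q (shiftedInf_ite_eq hN i)⟩
  · intro m M hM
    choose a ha using hM
    choose c hc using fun j => (hq _ _).1 (ha j)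
    refine ⟨_, congrArg q ((iInf_shiftedInf hg L fun j i => c j + a j i).symm.trans ?_)⟩
    simp only [← zpow_smul_shiftedInf, ← hc]

end ShiftedInf

instance Units.covariantClass_smul_le {M β : Type*} [Monoid M] [MulAction M β] [Preorder β]
    [CovariantClass M β HSMul.hSMul LE.le] : CovariantClass Mˣ β HSMul.hSMul LE.le :=
  ⟨fun u _ _ h => smul_mono_right (u : M) h⟩

instance OrderDual.covariantClass_smul_le {M β : Type*} [SMul M β] [Preorder β]
    [CovariantClass M β HSMul.hSMul LE.le] : CovariantClass M βᵒᵈ HSMul.hSMul LE.le :=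
  ⟨fun u _ _ h => smul_mono_right (α := β) u h⟩

def tUnit : Kˣ := Units.mk0 tK tK_ne_zero

section Lattices

variable {n : ℕ}

lemma tUnit_zpow_smul (c : ℤ) (L : Submodule O (V n)) : tUnit ^ c • L = tK ^ c • L := by
  rw [Units.smul_def, Units.val_zpow_eq_zpow_val, tUnit, Units.val_mk0]

lemma LatClass.mk_eq_mk_iff {L L' : Submodule O (V n)} :
    (⟦L⟧ : LatClass n) = ⟦L'⟧ ↔ ∃ c : ℤ, L' = tUnit ^ c • L := by
  simp only [tUnit_zpow_smul]
  exact Quotient.eq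

lemma coe_tUnit_pow_smul (m : ℕ) (x : V n) :
    ((tUnit ^ m : Kˣ) : K) • x = (PowerSeries.X ^ m : O) • x := by
  rw [Units.val_pow_eq_pow_val, tUnit, Units.val_mk0, tK, ← map_pow]
  exact algebraMap_smul K (PowerSeries.X ^ m : O) x

lemma tUnit_pow_smul_le_iff {m : ℕ} {L L' : Submodule O (V n)} :
    tUnit ^ m • L' ≤ L ↔ ∀ x ∈ L', (PowerSeries.X ^ m : O) • x ∈ L := by
  refine ⟨fun h x hx => ?_, ?_⟩
  · rw [← coe_tUnit_pow_smul]
    exact h (Submodule.smul_mem_pointwise_smul x _ L' hx)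
  · rintro h _ ⟨x, hx, rfl⟩
    show ((tUnit ^ m : Kˣ) : K) • x ∈ L
    rw [coe_tUnit_pow_smul]
    exact h x hx

lemma tUnit_smul_le (L : Submodule O (V n)) : tUnit • L ≤ L := by
  simpa using tUnit_pow_smul_le_iff (m := 1) |>.2 fun x hx => L.smul_mem _ hx

lemma X_pow_smul_mem_of_le {L : Submodule O (V n)} {x : V n} {m m' : ℕ} (h : m ≤ m')
    (hx : (PowerSeries.X ^ m : O) • x ∈ L) : (PowerSeries.X ^ m' : O) • x ∈ L := by
  obtain ⟨c, hc⟩ := pow_dvd_pow (PowerSeries.X : O) h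
  rw [hc, mul_comm, mul_smul]
  exact L.smul_mem c hx

/-- `K` is the localization `O[1/t]`, so the denominators of a `K`-combination of elements of `L`
are powers of `t`. -/
lemma exists_X_pow_smul_mem {L : Submodule O (V n)}
    (hL : Submodule.span K (L : Set (V n)) = ⊤) (x : V n) :
    ∃ m : ℕ, (PowerSeries.X ^ m : O) • x ∈ L := by
  have := isLocalizedModule_id (Submonoid.powers (PowerSeries.X : O)) (V n) K
  have hx : x ∈ L.localized' K (Submonoid.powers PowerSeries.X) LinearMap.id := by
    rw [Submodule.localized'_eq_span, LinearMap.id_coe, Set.image_id, hL]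
    trivial
  obtain ⟨y, hy, s, rfl⟩ := hx
  obtain ⟨m, hm : PowerSeries.X ^ m = (s : O)⟩ := s.2
  refine ⟨m, ?_⟩
  rwa [hm, ← Submonoid.smul_def, IsLocalizedModule.mk'_cancel']

lemma exists_X_pow_smul_le {L L' : Submodule O (V n)}
    (hL : Submodule.span K (L : Set (V n)) = ⊤) (hL' : L'.FG) :
    ∃ m : ℕ, ∀ x ∈ L', (PowerSeries.X ^ m : O) • x ∈ L := by
  obtain ⟨s, rfl⟩ := hL'
  choose m hm using exists_X_pow_smul_mem hL
  have : Submodule.span O (s : Set (V n)) ≤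
      L.comap ((PowerSeries.X ^ s.sup m : O) • LinearMap.id) :=
    Submodule.span_le.2 fun y hy => by
      simpa using X_pow_smul_mem_of_le (Finset.le_sup hy) (hm y)
  exact ⟨s.sup m, fun x hx => this hx⟩

lemma exists_tUnit_pow_smul_le {ι : Type*} [Fintype ι] {Ls : ι → Submodule O (V n)}
    (hLs : ∀ i, IsLattice (Ls i)) : ∃ N : ℕ, ∀ i j, tUnit ^ N • Ls j ≤ Ls i := by
  choose m hm using fun p : ι × ι => exists_X_pow_smul_le (hLs p.1).2 (hLs p.2).1
  refine ⟨Finset.univ.sup m, fun i j => tUnit_pow_smul_le_iff.2 fun x hx => ?_⟩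
  exact X_pow_smul_mem_of_le (Finset.le_sup (Finset.mem_univ (i, j))) (hm (i, j) x hx)

end Lattices

/-- The min-convex hull (and dually the max-convex hull) of a finite set of classes of
`O`-lattices is finite. -/
theorem minconvHull_finite_and_maxconvHull_finite {n k : ℕ}
    (Ls : Fin (k + 1) → Submodule O (V n)) (hLs : ∀ i, IsLattice (Ls i)) :
    (minconvHull (Set.range fun i => (⟦Ls i⟧ : LatClass n))).Finite ∧
    (maxconvHull (Set.range fun i => (⟦Ls i⟧ : LatClass n))).Finite := by
  obtain ⟨N, hN⟩ := exists_tUnit_pow_smul_le hLs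
  constructor
  · obtain ⟨X, hXfin, hLX, hX⟩ := exists_finite_iInf_closed_superset
      (fun L => (⟦L⟧ : LatClass n)) (fun _ _ => LatClass.mk_eq_mk_iff) tUnit_smul_le Ls N hN
    exact hXfin.subset (Set.sInter_subset_of_mem ⟨hX, hLX⟩)
  · obtain ⟨X, hXfin, hLX, hX⟩ := exists_finite_iInf_closed_superset
      (α := (Submodule O (V n))ᵒᵈ) (fun L => (⟦OrderDual.ofDual L⟧ : LatClass n)) (g := tUnit⁻¹)
      (fun _ _ => LatClass.mk_eq_mk_iff.trans <| (Equiv.neg ℤ).exists_congr fun c => by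
        rw [Equiv.neg_apply, inv_zpow', neg_neg]; rfl)
      (fun L => le_inv_smul_iff_smul_le.2 (tUnit_smul_le _))
      (OrderDual.toDual ∘ Ls) N (fun i j => by
        rw [inv_pow]; exact le_inv_smul_iff_smul_le.2 (hN j i))
    exact hXfin.subset (Set.sInter_subset_of_mem ⟨hX, hLX⟩)
end
end

section
/- In a cylindrical growth diagram for SL₃ with γ_{i,i+1} = ω₂ = (1,1,0): for every j with i+1 ≤ j ≤ i+n, the set dif(γ_{i,j}, γ_{i+1,j}) of rows where the two partitions differ has exactly 2 elements; it equals {1,2} at j = i+1, equals {2,3} at j = i+n, and is monotonically increasing in j with respect to the order {1,2} < {1,3} < {2,3}. -/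
/-!
Put `d_j = γ_{i,j} - γ_{i+1,j}`, a `0/1` vector since the columns differ by a vertical strip.
Sorting preserves sums, so the local rule keeps `∑ d_j` constant, equal to `|ω₂| = 2`.
The last entry of `sort x` is at most `x₂` and the sum of its last two entries is at most
`x₁ + x₂`, so the local rule makes `d_j(2)` and `d_j(1) + d_j(2)` nondecreasing in `j`; their sum
`d_j(1) + 2 d_j(2)` is the row-index sum of `dif(γ_{i,j}, γ_{i+1,j})`. At `j = i + n` the entry
`γ_{i,j}` is the rectangle, so `d_j` increases along the rows of the partition `γ_{i+1,j}`,
which forces `d_j = (0,1,1)`.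
-/

noncomputable section

/-- Sort a triple of integers into weakly decreasing order. -/
def sort3 (x : Fin 3 → ℤ) : Fin 3 → ℤ :=
  ![max (max (x 0) (x 1)) (x 2),
    x 0 + x 1 + x 2 - max (max (x 0) (x 1)) (x 2) - min (min (x 0) (x 1)) (x 2),
    min (min (x 0) (x 1)) (x 2)]

/-- A cylindrical growth diagram for `SL₃` of shape the `3 × k` rectangle `(k,k,k)`, on
the (periodically extended) staircase `{(i,j) : i ≤ j ≤ i + n}`.  Each entry `γ i j` is a
partition with at most three parts; the entries vanish on the diagonal, equal the full
rectangle at `j = i + n`, neighboring entries differ by vertical strips, the local growth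
rule `γ_{i+1,j+1} = sort(γ_{i+1,j} + γ_{i,j+1} - γ_{i,j})` holds on every unit square,
and the diagram is periodic: `γ_{i+n,j+n} = γ_{i,j}`. -/
structure CylGrowthDiagram (n k : ℕ) where
  γ : ℤ → ℤ → Fin 3 → ℤ
  nonneg : ∀ i j : ℤ, i ≤ j → j ≤ i + n → ∀ r, 0 ≤ γ i j r
  antitone : ∀ i j : ℤ, i ≤ j → j ≤ i + n → γ i j 1 ≤ γ i j 0 ∧ γ i j 2 ≤ γ i j 1
  diag : ∀ i : ℤ, γ i i = fun _ => 0
  rect : ∀ i : ℤ, γ i (i + n) = fun _ => (k : ℤ)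
  vstrip_col : ∀ i j : ℤ, i + 1 ≤ j → j ≤ i + n →
    ∀ r, γ (i + 1) j r ≤ γ i j r ∧ γ i j r ≤ γ (i + 1) j r + 1
  vstrip_row : ∀ i j : ℤ, i ≤ j → j + 1 ≤ i + n →
    ∀ r, γ i j r ≤ γ i (j + 1) r ∧ γ i (j + 1) r ≤ γ i j r + 1
  locRule : ∀ i j : ℤ, i + 1 ≤ j → j + 1 ≤ i + n →
    γ (i + 1) (j + 1) = sort3 (fun r => γ (i + 1) j r + γ i (j + 1) r - γ i j r)
  periodic : ∀ i j : ℤ, γ (i + n) (j + n) = γ i j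

def dif {ι : Type*} [Fintype ι] (a b : ι → ℤ) : Finset ι := {r | a r ≠ b r}

section dif

variable {ι : Type*} [Fintype ι] {a b : ι → ℤ}

theorem eq_add_ite_mem_dif [DecidableEq ι] (hab : ∀ r, b r ≤ a r ∧ a r ≤ b r + 1) (r : ι) :
    a r = b r + if r ∈ dif a b then 1 else 0 := by
  have := hab r
  by_cases h : a r = b r
  · simp [dif, h]
  · simp only [dif, Finset.mem_filter, Finset.mem_univ, true_and, if_pos h]
    omega

theorem sum_dif_eq_sum_mul_sub (hab : ∀ r, b r ≤ a r ∧ a r ≤ b r + 1) (f : ι → ℤ) :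
    ∑ r ∈ dif a b, f r = ∑ r, f r * (a r - b r) := by
  rw [dif, Finset.sum_filter]
  refine Finset.sum_congr rfl fun r _ => ?_
  have := hab r
  by_cases h : a r = b r
  · simp [h]
  · rw [if_pos h, show a r - b r = 1 by omega, mul_one]

theorem card_dif_eq_sum_sub (hab : ∀ r, b r ≤ a r ∧ a r ≤ b r + 1) :
    ((dif a b).card : ℤ) = ∑ r, (a r - b r) := by
  simpa using sum_dif_eq_sum_mul_sub hab 1

end dif

theorem sort3_sum (x : Fin 3 → ℤ) : ∑ r, sort3 x r = ∑ r, x r := by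
  simp only [Fin.sum_univ_three, sort3, Matrix.cons_val_zero, Matrix.cons_val_one,
    Matrix.cons_val_two, Matrix.head_cons, Matrix.tail_cons]
  ring

theorem sort3_two_le (x : Fin 3 → ℤ) (r : Fin 3) : sort3 x 2 ≤ x r := by
  fin_cases r <;> simp [sort3]

theorem sort3_one_add_two_le (x : Fin 3 → ℤ) {r s : Fin 3} (hrs : r ≠ s) :
    sort3 x 1 + sort3 x 2 ≤ x r + x s := by
  fin_cases r <;> fin_cases s <;> simp [sort3] at hrs ⊢ <;> omega

namespace CylGrowthDiagram

variable {n k : ℕ} (D : CylGrowthDiagram n k) (i : ℤ)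

def stripDiff (j : ℤ) (r : Fin 3) : ℤ := D.γ i j r - D.γ (i + 1) j r

def stripWeight (j : ℤ) : ℤ := D.stripDiff i j 1 + 2 * D.stripDiff i j 2

variable {D i}

theorem sum_stripDiff_succ {j : ℤ} (hj : i + 1 ≤ j) (hjn : j + 1 ≤ i + n) :
    ∑ r, D.stripDiff i (j + 1) r = ∑ r, D.stripDiff i j r := by
  have hsum := sort3_sum fun r => D.γ (i + 1) j r + D.γ i (j + 1) r - D.γ i j r
  rw [← D.locRule i j hj hjn] at hsum
  simp only [stripDiff, Fin.sum_univ_three] at hsum ⊢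
  linarith

theorem sum_stripDiff_eq_two (h : D.γ i (i + 1) = ![1, 1, 0]) {j : ℤ} (hj : i + 1 ≤ j)
    (hjn : j ≤ i + n) : ∑ r, D.stripDiff i j r = 2 := by
  induction j, hj using Int.leInduction with
  | base => simp [stripDiff, h, D.diag, Fin.sum_univ_three]
  | succ j hj ih => rw [sum_stripDiff_succ hj hjn, ih (by omega)]

theorem stripWeight_le_succ {j : ℤ} (hj : i + 1 ≤ j) (hjn : j + 1 ≤ i + n) :
    D.stripWeight i j ≤ D.stripWeight i (j + 1) := by
  have hloc := D.locRule i j hj hjn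
  have h2 : D.γ (i + 1) (j + 1) 2 ≤ _ := hloc ▸ sort3_two_le _ 2
  have h12 : D.γ (i + 1) (j + 1) 1 + D.γ (i + 1) (j + 1) 2 ≤ _ :=
    hloc ▸ sort3_one_add_two_le _ (show (1 : Fin 3) ≠ 2 by decide)
  simp only [stripWeight, stripDiff] at h2 h12 ⊢
  linarith

theorem stripWeight_monotoneOn : MonotoneOn (D.stripWeight i) (Set.Icc (i + 1) (i + n)) :=
  monotoneOn_of_le_succ Set.ordConnected_Icc fun j _ hj hj1 => by
    rw [Order.succ_eq_add_one] at hj1 ⊢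
    exact stripWeight_le_succ hj.1 hj1.2

theorem stripDiff_end (h : D.γ i (i + 1) = ![1, 1, 0]) (hn : 1 ≤ n) :
    D.stripDiff i (i + n) = ![0, 1, 1] := by
  have hsum := sum_stripDiff_eq_two h (j := i + n) (by omega) le_rfl
  have hpart := D.antitone (i + 1) (i + n) (by omega) (by omega)
  have hstrip := D.vstrip_col i (i + n) (by omega) le_rfl
  simp only [D.rect] at hstrip
  simp only [stripDiff, Fin.sum_univ_three, D.rect] at hsum
  have := hstrip 0
  have := hstrip 1
  have := hstrip 2
  funext r
  fin_cases r <;> simp [stripDiff, D.rect] <;> omega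

theorem card_dif_eq_two (h : D.γ i (i + 1) = ![1, 1, 0]) {j : ℤ} (hj : i + 1 ≤ j)
    (hjn : j ≤ i + n) : (dif (D.γ i j) (D.γ (i + 1) j)).card = 2 := by
  have hcard := card_dif_eq_sum_sub (D.vstrip_col i j hj hjn)
  exact_mod_cast hcard.trans (sum_stripDiff_eq_two h hj hjn)

theorem sum_dif_eq_stripWeight {j : ℤ} (hj : i + 1 ≤ j) (hjn : j ≤ i + n) :
    ∑ s ∈ dif (D.γ i j) (D.γ (i + 1) j), ((s : ℕ) : ℤ) = D.stripWeight i j := by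
  rw [sum_dif_eq_sum_mul_sub (D.vstrip_col i j hj hjn)]
  simp [Fin.sum_univ_three, stripWeight, stripDiff]

theorem dif_end (h : D.γ i (i + 1) = ![1, 1, 0]) (hn : 1 ≤ n) :
    dif (D.γ i (i + n)) (D.γ (i + 1) (i + n)) = {1, 2} := by
  ext r
  have hr := congrFun (stripDiff_end h hn) r
  fin_cases r <;> simp [dif, stripDiff] at hr ⊢ <;> omega

end CylGrowthDiagram

/-- If `γ_{i,i+1} = ω₂ = (1,1,0)`, then for each `j` with `i+1 ≤ j ≤ i+n` the set
`dif(γ_{i,j}, γ_{i+1,j})` of rows where the two partitions differ (by one box) has exactly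
two elements; it equals `{1,2}` at `j = i+1`, equals `{2,3}` at `j = i+n` (rows indexed
`0,1,2` here), and increases monotonically in `j` with respect to the total order
`{1,2} < {1,3} < {2,3}`, which is faithfully encoded by the sum of the row indices. -/
theorem dif_pair_monotone {n k : ℕ} (D : CylGrowthDiagram n k) (i : ℤ)
    (h : D.γ i (i + 1) = ![1, 1, 0]) :
    ∃ Df : ℤ → Finset (Fin 3),
      (∀ j : ℤ, i + 1 ≤ j → j ≤ i + n →
        (Df j).card = 2 ∧
        ∀ s, D.γ i j s = D.γ (i + 1) j s + if s ∈ Df j then 1 else 0) ∧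
      Df (i + 1) = {0, 1} ∧ Df (i + n) = {1, 2} ∧
      (∀ j j' : ℤ, i + 1 ≤ j → j ≤ j' → j' ≤ i + n →
        ∑ s ∈ Df j, (s : ℕ) ≤ ∑ s ∈ Df j', (s : ℕ)) := by
  have hn : n ≠ 1 := by
    rintro rfl
    have h0 := congrFun (D.rect i) 0
    have h2 := congrFun (D.rect i) 2
    simp [h] at h0 h2
    omega
  -- For `n = 0` the point `i + n = i` lies outside the strip, where `dif` is unconstrained.
  let Df : ℤ → Finset (Fin 3) := fun j =>
    if j = i + n then {1, 2} else dif (D.γ i j) (D.γ (i + 1) j)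
  have hDf : ∀ j, i + 1 ≤ j → j ≤ i + n → Df j = dif (D.γ i j) (D.γ (i + 1) j) := by
    intro j hj hjn
    by_cases hjend : j = i + n
    · subst hjend
      exact (if_pos rfl).trans (D.dif_end h (by omega)).symm
    · exact if_neg hjend
  refine ⟨Df, fun j hj hjn => ?_, ?_, if_pos rfl, fun j j' hj hjj' hj'n => ?_⟩
  · rw [hDf j hj hjn]
    exact ⟨D.card_dif_eq_two h hj hjn, eq_add_ite_mem_dif (D.vstrip_col i j hj hjn)⟩
  · rw [show Df (i + 1) = _ from if_neg (by omega), h, D.diag]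
    decide
  · have hmono := D.stripWeight_monotoneOn ⟨hj, by omega⟩ ⟨by omega, hj'n⟩ hjj'
    rw [← D.sum_dif_eq_stripWeight hj (by omega), ← D.sum_dif_eq_stripWeight (by omega) hj'n,
      ← hDf j hj (by omega), ← hDf j' (by omega) hj'n] at hmono
    exact_mod_cast hmono
end
end

section
/- In a cylindrical growth diagram for SL₃, the local rule on a unit square determines the southeast entry from the other three: γ_{i+1,j+1} is obtained from γ_{i,j+1} by subtracting 1 in exactly the rows where γ_{i,j} and γ_{i+1,j} differ, then sorting into weakly decreasing order; moreover the result is always a partition (nonnegative, weakly decreasing) and γ_{i,j+1}/γ_{i+1,j+1} is a vertical strip. -/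
/-!
Row by row, `b + c - a` equals `c - (a - b)` with `a - b ∈ {0, 1}`, and it is at least `b ≥ 0`.
Sorting a triple is monotone, commutes with subtracting a constant and fixes the already sorted
`c`; so the sorted triple lies between `c - 1` and `c` and is nonnegative.
-/

noncomputable section

theorem sort3_monotone : Monotone sort3 := by
  intro x y hxy r
  have h₀ : x 0 ≤ y 0 := hxy 0
  have h₁ : x 1 ≤ y 1 := hxy 1
  have h₂ : x 2 ≤ y 2 := hxy 2
  fin_cases r <;> simp [sort3] <;> omega

theorem sort3_antitone (x : Fin 3 → ℤ) : Antitone (sort3 x) := by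
  intro i j hij
  fin_cases i <;> fin_cases j <;> simp [sort3] at hij ⊢ <;> omega

theorem sort3_sub_const (x : Fin 3 → ℤ) (k : ℤ) (r : Fin 3) :
    sort3 (fun i => x i - k) r = sort3 x r - k := by
  fin_cases r <;> simp [sort3] <;> omega

theorem sort3_of_antitone {x : Fin 3 → ℤ} (h₁ : x 1 ≤ x 0) (h₂ : x 2 ≤ x 1) : sort3 x = x := by
  funext r
  fin_cases r <;> simp [sort3] <;> omega

theorem local_rule_determines_general {a b c : Fin 3 → ℤ}
    (hb : (∀ r, 0 ≤ b r) ∧ b 1 ≤ b 0 ∧ b 2 ≤ b 1)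
    (hc : (∀ r, 0 ≤ c r) ∧ c 1 ≤ c 0 ∧ c 2 ≤ c 1)
    (hab : ∀ r, b r ≤ a r ∧ a r ≤ b r + 1)
    (hca : ∀ r, a r ≤ c r ∧ c r ≤ a r + 1) :
    (sort3 (fun r => b r + c r - a r) = sort3 (fun r => c r - (a r - b r))) ∧
    (∀ r, 0 ≤ sort3 (fun r => b r + c r - a r) r) ∧
    (sort3 (fun r => b r + c r - a r) 1 ≤ sort3 (fun r => b r + c r - a r) 0 ∧
      sort3 (fun r => b r + c r - a r) 2 ≤ sort3 (fun r => b r + c r - a r) 1) ∧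
    (∀ r, sort3 (fun r => b r + c r - a r) r ≤ c r ∧
      c r ≤ sort3 (fun r => b r + c r - a r) r + 1) := by
  have hc_sorted : sort3 c = c := sort3_of_antitone hc.2.1 hc.2.2
  have h_nonneg : (fun _ => 0) ≤ fun r => b r + c r - a r := fun r => by
    linarith [hb.1 r, hca r]
  have h_le : (fun r => b r + c r - a r) ≤ c := fun r => by linarith [hab r]
  have h_ge : (fun r => c r - 1) ≤ fun r => b r + c r - a r := fun r => by linarith [hab r]
  refine ⟨congrArg sort3 (funext fun r => by ring), fun r => ?_,
    ⟨sort3_antitone _ (by decide), sort3_antitone _ (by decide)⟩, fun r => ⟨?_, ?_⟩⟩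
  · simpa [sort3_of_antitone (x := fun _ => 0) le_rfl le_rfl] using sort3_monotone h_nonneg r
  · simpa [hc_sorted] using sort3_monotone h_le r
  · have := sort3_monotone h_ge r
    rw [sort3_sub_const, hc_sorted] at this
    linarith

/-- The local rule of a growth diagram determines the southeast entry of a unit square:
with `a = γ_{i,j}`, `b = γ_{i+1,j}`, `c = γ_{i,j+1}` partitions (at most three parts)
such that `a/b` and `c/a` are vertical strips, the entry
`d = sort(b + c - a)` is obtained from `c` by subtracting `1` in exactly the rows where
`a` and `b` differ and sorting; it is always a partition (nonnegative, weakly decreasing),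
and `c/d` is a vertical strip. -/
theorem local_rule_determines {a b c : Fin 3 → ℤ}
    (ha : (∀ r, 0 ≤ a r) ∧ a 1 ≤ a 0 ∧ a 2 ≤ a 1)
    (hb : (∀ r, 0 ≤ b r) ∧ b 1 ≤ b 0 ∧ b 2 ≤ b 1)
    (hc : (∀ r, 0 ≤ c r) ∧ c 1 ≤ c 0 ∧ c 2 ≤ c 1)
    (hab : ∀ r, b r ≤ a r ∧ a r ≤ b r + 1)
    (hca : ∀ r, a r ≤ c r ∧ c r ≤ a r + 1) :
    (sort3 (fun r => b r + c r - a r) = sort3 (fun r => c r - (a r - b r))) ∧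
    (∀ r, 0 ≤ sort3 (fun r => b r + c r - a r) r) ∧
    (sort3 (fun r => b r + c r - a r) 1 ≤ sort3 (fun r => b r + c r - a r) 0 ∧
      sort3 (fun r => b r + c r - a r) 2 ≤ sort3 (fun r => b r + c r - a r) 1) ∧
    (∀ r, sort3 (fun r => b r + c r - a r) r ≤ c r ∧
      c r ≤ sort3 (fun r => b r + c r - a r) r + 1) :=
  local_rule_determines_general hb hc hab hca
end
end

section
/- In the A₂ weight lattice, let x, y be vertices with d(x,y) = aω₁ + bω₂ where a, b ≥ 1. Then the set of vertices lying on combinatorial geodesics from x to y (paths of length a+b of ω₁- and ω₂-steps) is exactly the set of lattice points of a parallelogram; its 'upper' boundary path consisting of b ω₂-steps followed by a ω₁-steps and its 'lower' boundary path of a ω₁-steps followed by b ω₂-steps are the unique geodesics of those step-type sequences. -/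
noncomputable section

/-- The `A₂` weight lattice `ℤ³/(1,1,1)`, the vertex set of one apartment of the `A₂`
affine building. -/
abbrev A2 := (Fin 3 → ℤ) ⧸ AddSubgroup.zmultiples (![1, 1, 1] : Fin 3 → ℤ)

/-- The projection `ℤ³ → ℤ³/(1,1,1)`. -/
def pr : (Fin 3 → ℤ) → A2 := QuotientAddGroup.mk

/-- An `ω₁`-step adds an element of the Weyl orbit of `ω₁ = (1,0,0)`. -/
def Step1 (x y : A2) : Prop :=
  ∃ w ∈ ({![1, 0, 0], ![0, 1, 0], ![0, 0, 1]} : Set (Fin 3 → ℤ)), y = x + pr w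

/-- An `ω₂`-step adds an element of the Weyl orbit of `ω₂ = (1,1,0)`. -/
def Step2 (x y : A2) : Prop :=
  ∃ w ∈ ({![1, 1, 0], ![1, 0, 1], ![0, 1, 1]} : Set (Fin 3 → ℤ)), y = x + pr w

/-- A step of either fundamental type. -/
def Step (x y : A2) : Prop := Step1 x y ∨ Step2 x y

/-- `f` is a lattice path of length `m` from `x` to `y` using `ω₁`- and `ω₂`-steps. -/
def IsPath (f : ℕ → A2) (m : ℕ) (x y : A2) : Prop :=
  f 0 = x ∧ f m = y ∧ ∀ i < m, Step (f i) (f (i + 1))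

/-!
In the coordinates `(s, t) ↦ pr (s • ω₁ + t • ω₂)` the `ω₁`-orbit is `(1, 0), (-1, 1), (0, -1)`
and the `ω₂`-orbit is `(0, 1), (1, -1), (-1, 0)`. So every step raises the height `s + t` by at
most one, and by exactly one only when it adds `ω₁` or `ω₂` itself. A path of length `a + b`
from `x` to `x + a • ω₁ + b • ω₂` has to raise the height at every step: in coordinates it is a
monotone lattice path from `(0, 0)` to `(a, b)`, whose points fill the parallelogram and whose
steps are determined by their types.
-/

theorem forall_eq_add_one_of_le_add_one {g : ℕ → ℤ} {m : ℕ}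
    (hle : ∀ i < m, g (i + 1) ≤ g i + 1) (hm : g m = g 0 + m) :
    ∀ i < m, g (i + 1) = g i + 1 := by
  have hsum : ∑ i ∈ Finset.range m, (g (i + 1) - g i) = ∑ _i ∈ Finset.range m, 1 := by
    rw [Finset.sum_range_sub, hm]
    simp
  have hle' : ∀ i ∈ Finset.range m, g (i + 1) - g i ≤ 1 := fun i hi ↦ by
    have := hle i (Finset.mem_range.1 hi)
    omega
  intro i hi
  have := (Finset.sum_eq_sum_iff_of_le hle').1 hsum i (Finset.mem_range.2 hi)
  omega

namespace A2

/-- Coordinates in the basis `ω₁, ω₂`: `pr (s • ω₁ + t • ω₂) ↦ (s, t)`. -/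
def coord : A2 →+ ℤ × ℤ :=
  QuotientAddGroup.lift _
    { toFun v := (v 0 - v 1, v 1 - v 2)
      map_zero' := rfl
      map_add' u v := by ext <;> simp only [Pi.add_apply, Prod.fst_add, Prod.snd_add] <;> ring }
    (AddSubgroup.zmultiples_le.2 rfl)

theorem coord_pr (v : Fin 3 → ℤ) : coord (pr v) = (v 0 - v 1, v 1 - v 2) := rfl

theorem coord_injective : Function.Injective coord := by
  refine (injective_iff_map_eq_zero coord).2 fun z hz ↦ ?_
  induction z using QuotientAddGroup.induction_on with
  | H v =>
    change coord (pr v) = 0 at hz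
    rw [coord_pr, Prod.mk_eq_zero, sub_eq_zero, sub_eq_zero] at hz
    refine (QuotientAddGroup.eq_zero_iff v).2 ⟨v 0, ?_⟩
    funext j
    fin_cases j <;> simp [hz.1, hz.2]

theorem coord_pr_smul_add_smul (s t : ℤ) :
    coord (pr (s • ![1, 0, 0] + t • ![1, 1, 0])) = (s, t) := by
  simp [coord_pr]

theorem eq_add_pr_iff {x z : A2} {s t : ℤ} :
    z = x + pr (s • ![1, 0, 0] + t • ![1, 1, 0]) ↔ coord z = coord x + (s, t) := by
  rw [← coord_injective.eq_iff, map_add, coord_pr_smul_add_smul]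

def height (z : A2) : ℤ := (coord z).1 + (coord z).2

end A2

open A2

section Steps

variable {x y : A2}

theorem Step1.coord_eq (h : Step1 x y) : coord y = coord x + (1, 0) ∨
    coord y = coord x + (-1, 1) ∨ coord y = coord x + (0, -1) := by
  obtain ⟨w, hw, rfl⟩ := h
  rcases hw with rfl | rfl | rfl <;> simp [coord_pr]

theorem Step2.coord_eq (h : Step2 x y) : coord y = coord x + (0, 1) ∨
    coord y = coord x + (1, -1) ∨ coord y = coord x + (-1, 0) := by
  obtain ⟨w, hw, rfl⟩ := h
  rcases hw with rfl | rfl | rfl <;> simp [coord_pr]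

theorem Step1.height_le (h : Step1 x y) : height y ≤ height x + 1 := by
  rcases h.coord_eq with e | e | e <;> simp only [height, e, Prod.fst_add, Prod.snd_add] <;> omega

theorem Step2.height_le (h : Step2 x y) : height y ≤ height x + 1 := by
  rcases h.coord_eq with e | e | e <;> simp only [height, e, Prod.fst_add, Prod.snd_add] <;> omega

theorem Step.height_le (h : Step x y) : height y ≤ height x + 1 :=
  h.elim Step1.height_le Step2.height_le

theorem Step1.coord_eq_of_height (h : Step1 x y) (hxy : height y = height x + 1) :
    coord y = coord x + (1, 0) := by
  rcases h.coord_eq with e | e | e <;> simp only [height, e, Prod.fst_add, Prod.snd_add] at hxy ⊢ <;>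
    omega

theorem Step2.coord_eq_of_height (h : Step2 x y) (hxy : height y = height x + 1) :
    coord y = coord x + (0, 1) := by
  rcases h.coord_eq with e | e | e <;> simp only [height, e, Prod.fst_add, Prod.snd_add] at hxy ⊢ <;>
    omega

theorem step1_of_coord_eq (h : coord y = coord x + (1, 0)) : Step1 x y :=
  ⟨![1, 0, 0], by simp, coord_injective (by simp [h, coord_pr])⟩

theorem step2_of_coord_eq (h : coord y = coord x + (0, 1)) : Step2 x y :=
  ⟨![1, 1, 0], by simp, coord_injective (by simp [h, coord_pr])⟩

end Steps

section Geodesics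

variable {f : ℕ → A2} {m : ℕ} {x y : A2}

theorem IsPath.height_succ (hf : IsPath f m x y) (hxy : height y = height x + m) :
    ∀ i < m, height (f (i + 1)) = height (f i) + 1 := by
  obtain ⟨rfl, rfl, hstep⟩ := hf
  exact forall_eq_add_one_of_le_add_one (fun i hi ↦ (hstep i hi).height_le) hxy

theorem IsPath.coord_mem_Icc (hf : IsPath f m x y) (hxy : height y = height x + m) {i : ℕ}
    (hi : i ≤ m) : coord (f i) ∈ Set.Icc (coord x) (coord y) := by
  have hmono : MonotoneOn (coord ∘ f) (Set.Iic m) := by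
    refine monotoneOn_of_le_succ Set.ordConnected_Iic fun j _ _ hj ↦ ?_
    rw [Order.succ_eq_add_one] at hj ⊢
    have hsucc := hf.height_succ hxy j hj
    rcases hf.2.2 j hj with hstep | hstep
    · simp [hstep.coord_eq_of_height hsucc, Prod.le_def]
    · simp [hstep.coord_eq_of_height hsucc, Prod.le_def]
  obtain ⟨rfl, rfl, -⟩ := hf
  exact ⟨hmono (Nat.zero_le m) hi (Nat.zero_le i), hmono hi Set.self_mem_Iic hi⟩

theorem isPath_of_coord_succ
    (hf : ∀ i < m, coord (f (i + 1)) = coord (f i) + (1, 0) ∨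
      coord (f (i + 1)) = coord (f i) + (0, 1)) :
    IsPath f m (f 0) (f m) :=
  ⟨rfl, rfl, fun i hi ↦ (hf i hi).imp step1_of_coord_eq step2_of_coord_eq⟩

theorem coord_eq_of_forall_step {p : ℕ → ℤ × ℤ} (hp : p 0 = 0)
    (hm : height (f m) = height (f 0) + m)
    (hf : ∀ i < m, Step1 (f i) (f (i + 1)) ∧ p (i + 1) = p i + (1, 0) ∨
      Step2 (f i) (f (i + 1)) ∧ p (i + 1) = p i + (0, 1)) :
    ∀ i ≤ m, coord (f i) = coord (f 0) + p i := by
  have hpath : IsPath f m (f 0) (f m) :=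
    ⟨rfl, rfl, fun i hi ↦ (hf i hi).imp And.left And.left⟩
  intro i hi
  induction i with
  | zero => simp [hp]
  | succ i ih =>
    have hsucc := hpath.height_succ hm i hi
    rcases hf i hi with ⟨hstep, hpi⟩ | ⟨hstep, hpi⟩
    · rw [hstep.coord_eq_of_height hsucc, ih (by omega), hpi, add_assoc]
    · rw [hstep.coord_eq_of_height hsucc, ih (by omega), hpi, add_assoc]

end Geodesics

section Parallelogram

variable {f : ℕ → A2} {x : A2}

theorem height_add_pr_smul_add_smul (x : A2) (s t : ℤ) :
    height (x + pr (s • ![1, 0, 0] + t • ![1, 1, 0])) = height x + (s + t) := by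
  simp only [height, map_add, coord_pr_smul_add_smul, Prod.fst_add, Prod.snd_add]
  ring

theorem IsPath.exists_eq_add_pr {a b : ℕ}
    (hf : IsPath f (a + b) x (x + pr ((a : ℤ) • ![1, 0, 0] + (b : ℤ) • ![1, 1, 0])))
    {i : ℕ} (hi : i ≤ a + b) :
    ∃ s t : ℕ, s ≤ a ∧ t ≤ b ∧ f i = x + pr ((s : ℤ) • ![1, 0, 0] + (t : ℤ) • ![1, 1, 0]) := by
  have hbox := hf.coord_mem_Icc (by rw [height_add_pr_smul_add_smul]; push_cast; ring) hi
  rw [map_add, coord_pr_smul_add_smul] at hbox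
  obtain ⟨⟨h1, h2⟩, h3, h4⟩ := hbox
  simp only [Prod.fst_add, Prod.snd_add] at h3 h4
  refine ⟨((coord (f i)).1 - (coord x).1).toNat, ((coord (f i)).2 - (coord x).2).toNat,
    by omega, by omega, eq_add_pr_iff.2 (Prod.ext ?_ ?_)⟩ <;>
    simp <;> omega

theorem exists_isPath_eq_add_pr {a b s t : ℕ} (hs : s ≤ a) (ht : t ≤ b) (x : A2) :
    ∃ f, IsPath f (a + b) x (x + pr ((a : ℤ) • ![1, 0, 0] + (b : ℤ) • ![1, 1, 0])) ∧
      f (s + t) = x + pr ((s : ℤ) • ![1, 0, 0] + (t : ℤ) • ![1, 1, 0]) := by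
  -- `s` ω₁-steps, then `b` ω₂-steps, then the remaining `a - s` ω₁-steps
  obtain ⟨f, hf⟩ : ∃ f : ℕ → A2, ∀ i, coord (f i) =
      coord x + (((min i s + (i - (s + b)) : ℕ) : ℤ), ((min (i - s) b : ℕ) : ℤ)) :=
    ⟨_, fun i ↦ eq_add_pr_iff.1 rfl⟩
  have hpath : IsPath f (a + b) (f 0) (f (a + b)) := isPath_of_coord_succ fun i _ ↦ by
    simp only [hf, add_assoc, Prod.ext_iff, Prod.fst_add, Prod.snd_add]
    omega
  have h0 : f 0 = x := coord_injective (by simp [hf])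
  have hend : f (a + b) = x + pr ((a : ℤ) • ![1, 0, 0] + (b : ℤ) • ![1, 1, 0]) :=
    eq_add_pr_iff.2 (by rw [hf]; congr 2 <;> omega)
  rw [h0, hend] at hpath
  exact ⟨f, hpath, eq_add_pr_iff.2 (by rw [hf]; congr 2 <;> omega)⟩

end Parallelogram

section Boundary

variable {a b : ℕ} {x : A2} {f : ℕ → A2}

theorem eq_of_forall_step2_of_forall_step1 (h0 : f 0 = x)
    (hm : f (a + b) = x + pr ((a : ℤ) • ![1, 0, 0] + (b : ℤ) • ![1, 1, 0]))
    (h2 : ∀ i < b, Step2 (f i) (f (i + 1)))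
    (h1 : ∀ i, b ≤ i → i < a + b → Step1 (f i) (f (i + 1))) :
    ∀ i ≤ a + b,
      f i = x + pr ((min i b : ℤ) • ![1, 1, 0] + ((i - b : ℕ) : ℤ) • ![1, 0, 0]) := by
  intro i hi
  rw [add_comm ((min i b : ℤ) • _), eq_add_pr_iff, ← h0]
  refine coord_eq_of_forall_step (p := fun i ↦ (((i - b : ℕ) : ℤ), (min i b : ℤ))) (by simp)
    (by rw [hm, h0, height_add_pr_smul_add_smul]; push_cast; ring) (fun j hj ↦ ?_) i hi
  by_cases hjb : j < b
  · exact .inr ⟨h2 j hjb, Prod.ext (by simp; omega) (by simp; omega)⟩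
  · exact .inl ⟨h1 j (by omega) hj, Prod.ext (by simp; omega) (by simp; omega)⟩

theorem eq_of_forall_step1_of_forall_step2 (h0 : f 0 = x)
    (hm : f (a + b) = x + pr ((a : ℤ) • ![1, 0, 0] + (b : ℤ) • ![1, 1, 0]))
    (h1 : ∀ i < a, Step1 (f i) (f (i + 1)))
    (h2 : ∀ i, a ≤ i → i < a + b → Step2 (f i) (f (i + 1))) :
    ∀ i ≤ a + b,
      f i = x + pr ((min i a : ℤ) • ![1, 0, 0] + ((i - a : ℕ) : ℤ) • ![1, 1, 0]) := by
  intro i hi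
  rw [eq_add_pr_iff, ← h0]
  refine coord_eq_of_forall_step (p := fun i ↦ ((min i a : ℤ), ((i - a : ℕ) : ℤ))) (by simp)
    (by rw [hm, h0, height_add_pr_smul_add_smul]; push_cast; ring) (fun j hj ↦ ?_) i hi
  by_cases hja : j < a
  · exact .inl ⟨h1 j hja, Prod.ext (by simp; omega) (by simp; omega)⟩
  · exact .inr ⟨h2 j (by omega) hj, Prod.ext (by simp; omega) (by simp; omega)⟩

end Boundary

theorem geodesic_parallelogram_general (a b : ℕ) (x y : A2)
    (h : y = x + pr ((a : ℤ) • ![1, 0, 0] + (b : ℤ) • ![1, 1, 0])) :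
    ({z : A2 | ∃ f : ℕ → A2, IsPath f (a + b) x y ∧ ∃ i ≤ a + b, f i = z} =
      {z : A2 | ∃ s t : ℕ, s ≤ a ∧ t ≤ b ∧
        z = x + pr ((s : ℤ) • ![1, 0, 0] + (t : ℤ) • ![1, 1, 0])}) ∧
    (∀ f : ℕ → A2, f 0 = x → f (a + b) = y →
      (∀ i < b, Step2 (f i) (f (i + 1))) →
      (∀ i, b ≤ i → i < a + b → Step1 (f i) (f (i + 1))) →
      ∀ i ≤ a + b,
        f i = x + pr ((min i b : ℤ) • ![1, 1, 0] + ((i - b : ℕ) : ℤ) • ![1, 0, 0])) ∧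
    (∀ f : ℕ → A2, f 0 = x → f (a + b) = y →
      (∀ i < a, Step1 (f i) (f (i + 1))) →
      (∀ i, a ≤ i → i < a + b → Step2 (f i) (f (i + 1))) →
      ∀ i ≤ a + b,
        f i = x + pr ((min i a : ℤ) • ![1, 0, 0] + ((i - a : ℕ) : ℤ) • ![1, 1, 0])) := by
  subst h
  refine ⟨Set.ext fun z ↦ ⟨?_, ?_⟩, fun f h0 hm ↦ eq_of_forall_step2_of_forall_step1 h0 hm,
    fun f h0 hm ↦ eq_of_forall_step1_of_forall_step2 h0 hm⟩
  · rintro ⟨f, hf, i, hi, rfl⟩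
    exact hf.exists_eq_add_pr hi
  · rintro ⟨s, t, hs, ht, rfl⟩
    obtain ⟨f, hf, hst⟩ := exists_isPath_eq_add_pr hs ht x
    exact ⟨f, hf, s + t, by omega, hst⟩

/-- For `d(x,y) = a·ω₁ + b·ω₂` with `a, b ≥ 1`: the set of vertices lying on
combinatorial geodesics (paths of minimal length `a + b` of `ω₁`- and `ω₂`-steps) from
`x` to `y` is exactly the parallelogram `{x + s·ω₁ + t·ω₂ : 0 ≤ s ≤ a, 0 ≤ t ≤ b}`;
moreover the geodesic taking `b` `ω₂`-steps followed by `a` `ω₁`-steps (the upper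
boundary) is unique, as is the geodesic taking `a` `ω₁`-steps followed by `b` `ω₂`-steps
(the lower boundary). -/
theorem geodesic_parallelogram (a b : ℕ) (ha : 1 ≤ a) (hb : 1 ≤ b) (x y : A2)
    (h : y = x + pr ((a : ℤ) • ![1, 0, 0] + (b : ℤ) • ![1, 1, 0])) :
    ({z : A2 | ∃ f : ℕ → A2, IsPath f (a + b) x y ∧ ∃ i ≤ a + b, f i = z} =
      {z : A2 | ∃ s t : ℕ, s ≤ a ∧ t ≤ b ∧
        z = x + pr ((s : ℤ) • ![1, 0, 0] + (t : ℤ) • ![1, 1, 0])}) ∧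
    (∀ f : ℕ → A2, f 0 = x → f (a + b) = y →
      (∀ i < b, Step2 (f i) (f (i + 1))) →
      (∀ i, b ≤ i → i < a + b → Step1 (f i) (f (i + 1))) →
      ∀ i ≤ a + b,
        f i = x + pr ((min i b : ℤ) • ![1, 1, 0] + ((i - b : ℕ) : ℤ) • ![1, 0, 0])) ∧
    (∀ f : ℕ → A2, f 0 = x → f (a + b) = y →
      (∀ i < a, Step1 (f i) (f (i + 1))) →
      (∀ i, a ≤ i → i < a + b → Step2 (f i) (f (i + 1))) →
      ∀ i ≤ a + b,
        f i = x + pr ((min i a : ℤ) • ![1, 0, 0] + ((i - a : ℕ) : ℤ) • ![1, 1, 0])) :=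
  geodesic_parallelogram_general a b x y h
end
end

section
/- Let K = ℂ((t)), O = ℂ[[t]], and let L, L' be O-lattices in K³ with d([L],[L']) = aω₁ + bω₂ where a, b are positive integers. Then conv([L],[L']) := minconv([L],[L']) ∩ maxconv([L],[L']) = {[L],[L']}, i.e. the intersection of the min- and max-convex hulls of two classes at 'generic' distance is trivial. -/
set_option maxHeartbeats 1000000
set_option synthInstance.maxHeartbeats 1000000

open Pointwise

noncomputable section

/-!
In the basis `v` the lattices `L` and `L'` are diagonal, with exponent vectors `0` and
`e = (-(a+b), -b, 0)`, and intersection, sum and scaling by `t^c` act on exponent vectors by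
`max`, `min` and translation. So `[L ∩ t^c L'] = [L + t^c' L']` says that `max(0, e + c)` and
`min(0, e + c')` have the same consecutive gaps. Truncating by `max(0, ·)` shrinks the gaps
`(a, b)` of `e` starting from the left, truncating by `min(0, ·)` starting from the right; as
`a, b > 0` the gaps agree only if none has shrunk (`c ≥ a + b`, and `L ∩ t^c L' = t^c L'`) or all
have vanished (`c ≤ 0`, and `L ∩ t^c L' = L`).
-/

open Submodule

lemma tK_zpow_mem_range_iff {m : ℤ} : tK ^ m ∈ Set.range (algebraMap O K) ↔ 0 ≤ m := by
  refine ⟨fun ⟨f, hf⟩ => ?_, fun hm => ?_⟩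
  · by_contra! hm
    have hX : PowerSeries.X ^ (-m).toNat * f = 1 := by
      apply IsFractionRing.injective O K
      rw [map_mul, hf, map_pow, ← tK, ← zpow_natCast, ← zpow_add₀ tK_ne_zero,
        Int.toNat_of_nonneg (by omega), neg_add_cancel, zpow_zero, map_one]
    exact PowerSeries.X_prime.not_dvd_one
      ((dvd_pow_self _ (by omega)).trans (Dvd.intro f hX))
  · lift m to ℕ using hm
    exact ⟨PowerSeries.X ^ m, by rw [map_pow, zpow_natCast]; rfl⟩

lemma tK_zpow_neg_mul_mem_range_of_le {m n : ℤ} {x : K} (hmn : m ≤ n)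
    (hx : tK ^ (-n) * x ∈ Set.range (algebraMap O K)) :
    tK ^ (-m) * x ∈ Set.range (algebraMap O K) := by
  obtain ⟨f, hf⟩ := tK_zpow_mem_range_iff.2 (sub_nonneg.2 hmn)
  obtain ⟨g, hg⟩ := hx
  refine ⟨f * g, ?_⟩
  rw [map_mul, hf, hg, ← mul_assoc, ← zpow_add₀ tK_ne_zero]
  congr 2
  ring

lemma tK_zpow_neg_mul_mem_range_max_iff {m n : ℤ} {x : K} :
    tK ^ (-max m n) * x ∈ Set.range (algebraMap O K) ↔
      tK ^ (-m) * x ∈ Set.range (algebraMap O K) ∧ tK ^ (-n) * x ∈ Set.range (algebraMap O K) := by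
  refine ⟨fun h => ⟨tK_zpow_neg_mul_mem_range_of_le (le_max_left m n) h,
    tK_zpow_neg_mul_mem_range_of_le (le_max_right m n) h⟩, fun ⟨hm, hn⟩ => ?_⟩
  rcases max_choice m n with h | h <;> rwa [h]

lemma repr_tK_zpow_smul_basis {ι M : Type*} [AddCommGroup M] [Module K M]
    (v : Module.Basis ι K M) (k : ℤ) (i : ι) :
    v.repr (tK ^ k • v i) = Finsupp.single i (tK ^ k) := by
  rw [map_smul, v.repr_self, Finsupp.smul_single, smul_eq_mul, mul_one]

section
variable {ι M : Type*} [AddCommGroup M] [Module K M] [Module O M]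

def diagLattice (v : Module.Basis ι K M) (e : ι → ℤ) : Submodule O M :=
  span O (Set.range fun i => tK ^ e i • v i)

lemma tK_zpow_smul_diagLattice [SMulCommClass K O M] (v : Module.Basis ι K M) (k : ℤ)
    (e : ι → ℤ) : tK ^ k • diagLattice v e = diagLattice v (fun i => e i + k) := by
  simp only [diagLattice, smul_span, Set.smul_set_range, smul_smul, ← zpow_add₀ tK_ne_zero,
    add_comm k]

variable [IsScalarTower O K M]

lemma mem_diagLattice_iff (v : Module.Basis ι K M) (e : ι → ℤ) (w : M) :
    w ∈ diagLattice v e ↔ ∀ i, tK ^ (-e i) * v.repr w i ∈ Set.range (algebraMap O K) := by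
  have hu : ∀ i, IsUnit (tK ^ e i) := fun i => (zpow_ne_zero _ tK_ne_zero).isUnit
  have hv : diagLattice v e = span O (Set.range (v.isUnitSMul hu)) := by
    rw [diagLattice]
    congr 2
    funext i
    exact (v.isUnitSMul_apply hu i).symm
  rw [hv, Module.Basis.mem_span_iff_repr_mem]
  simp only [Module.Basis.repr_isUnitSMul, Units.smul_def, smul_eq_mul,
    Units.val_inv_eq_inv_val, IsUnit.unit_spec, zpow_neg]

lemma diagLattice_le_iff (v : Module.Basis ι K M) {e e' : ι → ℤ} :
    diagLattice v e ≤ diagLattice v e' ↔ ∀ i, e' i ≤ e i := by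
  constructor
  · intro h i
    have hi := (mem_diagLattice_iff v e' _).1 (h (subset_span ⟨i, rfl⟩)) i
    rw [repr_tK_zpow_smul_basis, Finsupp.single_eq_same, ← zpow_add₀ tK_ne_zero,
      tK_zpow_mem_range_iff] at hi
    omega
  · intro h
    refine span_le.2 ?_
    rintro _ ⟨i, rfl⟩
    refine (mem_diagLattice_iff v e' _).2 fun j => ?_
    rw [repr_tK_zpow_smul_basis]
    rcases eq_or_ne j i with rfl | hji
    · rw [Finsupp.single_eq_same, ← zpow_add₀ tK_ne_zero, tK_zpow_mem_range_iff]
      linarith [h j]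
    · rw [Finsupp.single_eq_of_ne hji, mul_zero]
      exact ⟨0, map_zero _⟩

lemma diagLattice_injective (v : Module.Basis ι K M) : Function.Injective (diagLattice v) :=
  fun _ _ h => funext fun i =>
    le_antisymm ((diagLattice_le_iff v).1 h.ge i) ((diagLattice_le_iff v).1 h.le i)

lemma diagLattice_inf (v : Module.Basis ι K M) (e e' : ι → ℤ) :
    diagLattice v e ⊓ diagLattice v e' = diagLattice v (fun i => max (e i) (e' i)) := by
  ext w
  simp only [mem_inf, mem_diagLattice_iff, tK_zpow_neg_mul_mem_range_max_iff, forall_and]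

lemma diagLattice_sup (v : Module.Basis ι K M) (e e' : ι → ℤ) :
    diagLattice v e ⊔ diagLattice v e' = diagLattice v (fun i => min (e i) (e' i)) := by
  refine le_antisymm (sup_le ((diagLattice_le_iff v).2 fun i => min_le_left _ _)
    ((diagLattice_le_iff v).2 fun i => min_le_right _ _)) (span_le.2 ?_)
  rintro _ ⟨i, rfl⟩
  show tK ^ min (e i) (e' i) • v i ∈ _
  rcases min_choice (e i) (e' i) with h | h <;> rw [h]
  · exact mem_sup_left (subset_span ⟨i, rfl⟩)
  · exact mem_sup_right (subset_span ⟨i, rfl⟩)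

end

lemma mk_diagLattice_eq_mk_iff {ι : Type*} {n : ℕ} (v : Module.Basis ι K (V n)) {e e' : ι → ℤ} :
    (⟦diagLattice v e⟧ : LatClass n) = ⟦diagLattice v e'⟧ ↔ ∃ k : ℤ, ∀ i, e' i = e i + k := by
  rw [Quotient.eq]
  refine exists_congr fun k => ?_
  rw [tK_zpow_smul_diagLattice, (diagLattice_injective v).eq_iff, funext_iff]

lemma mk_tK_zpow_smul {n : ℕ} (L : Submodule O (V n)) (k : ℤ) :
    (⟦tK ^ k • L⟧ : LatClass n) = ⟦L⟧ :=
  (Quotient.sound (show Homothetic L (tK ^ k • L) from ⟨k, rfl⟩)).symm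

def distExponents (a b : ℤ) : Fin 3 → ℤ := ![-(a + b), -b, 0]

lemma span_range_eq_diagLattice_distExponents {M : Type*} [AddCommGroup M] [Module K M]
    [Module O M] (v : Module.Basis (Fin 3) K M) (a b : ℤ) :
    span O (Set.range ![tK ^ (-(a + b)) • v 0, tK ^ (-b) • v 1, v 2]) =
      diagLattice v (distExponents a b) := by
  rw [diagLattice]
  congr 2
  funext i
  fin_cases i <;> simp [distExponents]

lemma forall_distExponents_add_nonpos_iff {a b : ℤ} (ha : 0 ≤ a) (hb : 0 ≤ b) (c : ℤ) :
    (∀ i, distExponents a b i + c ≤ 0) ↔ c ≤ 0 := by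
  simp only [Fin.forall_fin_succ, distExponents, Matrix.cons_val_zero, Matrix.cons_val_succ,
    Matrix.cons_val_fin_one, forall_const]
  omega

lemma forall_nonneg_distExponents_add_iff {a b : ℤ} (ha : 0 ≤ a) (hb : 0 ≤ b) (c : ℤ) :
    (∀ i, 0 ≤ distExponents a b i + c) ↔ a + b ≤ c := by
  simp only [Fin.forall_fin_succ, distExponents, Matrix.cons_val_zero, Matrix.cons_val_succ,
    Matrix.cons_val_fin_one, forall_const]
  omega

lemma le_zero_or_add_le_of_min_eq_max_add {a b c c' k : ℤ} (ha : 0 < a) (hb : 0 < b)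
    (h : ∀ i, min 0 (distExponents a b i + c') = max 0 (distExponents a b i + c) + k) :
    c ≤ 0 ∨ a + b ≤ c := by
  have h₀ := h 0
  have h₁ := h 1
  have h₂ := h 2
  simp only [distExponents, Matrix.cons_val] at h₀ h₁ h₂
  omega

/-- If `d([L],[L']) = a·ω₁ + b·ω₂` with `a, b ≥ 1` (witnessed by a `K`-basis `v` of `K³`
with `L = span_O(v₁,v₂,v₃)` and `L' = span_O(t^{-(a+b)}v₁, t^{-b}v₂, v₃)`), then
`conv([L],[L']) = minconv([L],[L']) ∩ maxconv([L],[L']) = {[L],[L']}`, where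
`minconv([L],[L']) = {[L ∩ t^c L'] : c ∈ ℤ}` and `maxconv([L],[L']) = {[L + t^c L'] : c ∈ ℤ}`. -/
theorem conv_pair_trivial (a b : ℕ) (ha : 1 ≤ a) (hb : 1 ≤ b)
    (v : Module.Basis (Fin 3) K (V 3)) :
    let L : Submodule O (V 3) := Submodule.span O (Set.range fun i => (v i : V 3))
    let L' : Submodule O (V 3) := Submodule.span O
      (Set.range ![(tK ^ (-(a + b : ℤ))) • v 0, (tK ^ (-(b : ℤ))) • v 1, v 2])
    {C : LatClass 3 | ∃ c : ℤ, C = ⟦L ⊓ (tK ^ c) • L'⟧} ∩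
      {C : LatClass 3 | ∃ c : ℤ, C = ⟦L ⊔ (tK ^ c) • L'⟧} =
    {(⟦L⟧ : LatClass 3), (⟦L'⟧ : LatClass 3)} := by
  intro L L'
  have hL : L = diagLattice v fun _ => 0 := by
    simp only [L, diagLattice, zpow_zero, one_smul]
  have hL' : L' = diagLattice v (distExponents a b) :=
    span_range_eq_diagLattice_distExponents v a b
  have hL_le_smul (c : ℤ) : L ≤ tK ^ c • L' ↔ c ≤ 0 := by
    rw [hL, hL', tK_zpow_smul_diagLattice, diagLattice_le_iff]
    exact forall_distExponents_add_nonpos_iff (by omega) (by omega) c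
  have hsmul_le_L (c : ℤ) : tK ^ c • L' ≤ L ↔ (a + b : ℤ) ≤ c := by
    rw [hL, hL', tK_zpow_smul_diagLattice, diagLattice_le_iff]
    exact forall_nonneg_distExponents_add_iff (by omega) (by omega) c
  ext C
  constructor
  · rintro ⟨⟨c, rfl⟩, c', hc'⟩
    rw [hL, hL', tK_zpow_smul_diagLattice, tK_zpow_smul_diagLattice, diagLattice_inf,
      diagLattice_sup] at hc'
    obtain ⟨k, hk⟩ := (mk_diagLattice_eq_mk_iff v).1 hc'
    rcases le_zero_or_add_le_of_min_eq_max_add (by omega) (by omega) hk with hc | hc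
    · exact Or.inl (by rw [inf_eq_left.2 ((hL_le_smul c).2 hc)])
    · exact Or.inr (by rw [inf_eq_right.2 ((hsmul_le_L c).2 hc)]; exact mk_tK_zpow_smul L' c)
  · rintro (rfl | rfl)
    · refine ⟨⟨0, ?_⟩, a + b, ?_⟩
      · rw [inf_eq_left.2 ((hL_le_smul 0).2 le_rfl)]
      · rw [sup_eq_left.2 ((hsmul_le_L _).2 le_rfl)]
    · refine ⟨⟨a + b, ?_⟩, 0, ?_⟩
      · rw [inf_eq_right.2 ((hsmul_le_L _).2 le_rfl), mk_tK_zpow_smul]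
      · rw [sup_eq_right.2 ((hL_le_smul 0).2 le_rfl), zpow_zero, one_smul]
end
end
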